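/- For any k ∈ ℝ, y > 0, and d₂ ∈ ℝ, one has C_BS(k,y) ≥ Φ(d₂ + y) - e^k·Φ(d₂). -/

import Mathlib

open MeasureTheory Real Filter Asymptotics Set

/-- Standard normal density. -/
noncomputable def phi (z : ℝ) : ℝ := (Real.sqrt (2 * Real.pi))⁻¹ * Real.exp (-z ^ 2 / 2)

/-- Standard normal CDF. -/
noncomputable def Phi (x : ℝ) : ℝ := ∫ z in Set.Iic x, phi z

/-- Black–Scholes normalized call price. -/
noncomputable def CBS (k y : ℝ) : ℝ :=
  if 0 < y then Phi (-k / y + y / 2) - Real.exp k * Phi (-k / y - y / 2)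
  else max (1 - Real.exp k) 0

/-- Implied total standard deviation: inverse of `CBS k` on `[0,∞)`. -/
noncomputable def YBS (k c : ℝ) : ℝ := sInf {y : ℝ | 0 ≤ y ∧ CBS k y = c}

/-- Inverse of the standard normal CDF on (0,1). -/
noncomputable def PhiInv (u : ℝ) : ℝ := sInf {x : ℝ | u ≤ Phi x}

/-- Extended-real quantile with the convention `Φ⁻¹(u) = +∞` for `u ≥ 1`, `-∞` for `u ≤ 0`. -/
noncomputable def PhiInvE (u : ℝ) : EReal :=
  if 1 ≤ u then ⊤ else if u ≤ 0 then ⊥ else ((PhiInv u : ℝ) : EReal)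

/-! The spread `F d = Φ(d + y) - eᵏ Φ(d)` has derivative `φ(d + y) - eᵏ φ(d) = φ(d) (e^{-dy - y²/2} - eᵏ)`,
which is nonnegative exactly for `d ≤ d⋆ = -k/y - y/2`. Hence `F` is maximal at `d⋆`, and `F d⋆ = C_BS(k, y)`. -/

lemma continuous_phi : Continuous phi := by unfold phi; fun_prop

lemma phi_pos (z : ℝ) : 0 < phi z := by unfold phi; positivity

lemma integrable_phi : Integrable phi := by
  convert (integrable_exp_neg_mul_sq (b := 2⁻¹) (by norm_num)).const_mul
    (Real.sqrt (2 * Real.pi))⁻¹ using 2 with z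
  unfold phi
  ring_nf

lemma hasDerivAt_Phi (x : ℝ) : HasDerivAt Phi (phi x) x := by
  have hPhi : (fun u => Phi 0 + ∫ z in (0 : ℝ)..u, phi z) = Phi := by
    ext u
    rw [Phi, Phi, ← intervalIntegral.integral_Iic_sub_Iic integrable_phi.integrableOn
      integrable_phi.integrableOn]
    ring
  rw [← hPhi]
  exact (intervalIntegral.integral_hasDerivAt_right integrable_phi.intervalIntegrable
    continuous_phi.aestronglyMeasurable.stronglyMeasurableAtFilter
    continuous_phi.continuousAt).const_add _

lemma phi_add (d y : ℝ) : phi (d + y) = phi d * exp (-(d * y) - y ^ 2 / 2) := by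
  unfold phi
  rw [mul_assoc, ← exp_add]
  ring_nf

lemma le_of_hasDerivAt_nonneg_of_nonpos {f f' : ℝ → ℝ} {a : ℝ}
    (hf : ∀ x, HasDerivAt f (f' x) x) (hleft : ∀ x < a, 0 ≤ f' x) (hright : ∀ x, a < x → f' x ≤ 0)
    (x : ℝ) : f x ≤ f a := by
  have hcont : Continuous f := continuous_iff_continuousAt.2 fun x => (hf x).continuousAt
  rcases le_total x a with hxa | hax
  · refine monotoneOn_of_hasDerivWithinAt_nonneg (convex_Iic a) hcont.continuousOn
      (fun z _ => (hf z).hasDerivWithinAt) (fun z hz => hleft z ?_) hxa self_mem_Iic hxa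
    rwa [interior_Iic] at hz
  · refine antitoneOn_of_hasDerivWithinAt_nonpos (convex_Ici a) hcont.continuousOn
      (fun z _ => (hf z).hasDerivWithinAt) (fun z hz => hright z ?_) self_mem_Ici hax hax
    rwa [interior_Ici] at hz

lemma exp_mul_phi_le_phi_add_iff {k y d : ℝ} (hy : 0 < y) :
    exp k * phi d ≤ phi (d + y) ↔ d ≤ -k / y - y / 2 := by
  have hexponent : -(d * y) - y ^ 2 / 2 - k = y * (-k / y - y / 2 - d) := by
    field_simp
    ring
  rw [phi_add, mul_comm (phi d), mul_le_mul_iff_left₀ (phi_pos d), exp_le_exp, ← sub_nonneg,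
    hexponent, mul_nonneg_iff_of_pos_left hy, sub_nonneg]

lemma Phi_add_sub_exp_mul_Phi_le {k y : ℝ} (hy : 0 < y) (d : ℝ) :
    Phi (d + y) - exp k * Phi d ≤
      Phi ((-k / y - y / 2) + y) - exp k * Phi (-k / y - y / 2) := by
  refine le_of_hasDerivAt_nonneg_of_nonpos (f' := fun d => phi (d + y) - exp k * phi d)
    (fun d => ((hasDerivAt_Phi (d + y)).comp_add_const d y).sub
      ((hasDerivAt_Phi d).const_mul (exp k)))
    (fun d hd => sub_nonneg.2 ((exp_mul_phi_le_phi_add_iff hy).2 hd.le))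
    (fun d hd => sub_nonpos.2 (not_le.1 ((exp_mul_phi_le_phi_add_iff hy).not.2 hd.not_ge)).le) d

theorem stmt_10 (k y d₂ : ℝ) (hy : 0 < y) :
    CBS k y ≥ Phi (d₂ + y) - Real.exp k * Phi d₂ := by
  have hd₁ : -k / y + y / 2 = (-k / y - y / 2) + y := by ring
  rw [CBS, if_pos hy, hd₁]
  exact Phi_add_sub_exp_mul_Phi_le hy d₂
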